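/- arXiv:2011.12136 — 8 statements merged into one kernel-verified Lean document; each statement's English description precedes it below -/
import Mathlib

section
/- For each φ ∈ (0, π/2) there is exactly one ψ ∈ (0, π) satisfying cot(φ) = cot(ψ) + (π − ψ)·csc²(ψ). Consequently, the function ψ ↦ cot(ψ) + (π−ψ)/sin²(ψ) is a strictly decreasing homeomorphism from (0, π) onto (0, ∞). -/
/-!
Writing `f ψ = (sin ψ cos ψ + (π - ψ)) / sin² ψ`, one computes
`f' ψ = -2 (sin ψ + (π - ψ) cos ψ) / sin³ ψ`, which is negative on `(0, π)` because
`u cos u < sin u` there (take `u = π - ψ`). Since `f → ∞` at `0⁺`, and with `u = π - ψ`,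
`0 < f ψ = (u - sin u cos u) / sin² u ≤ π² u / 6 → 0` at `π⁻`, the intermediate value theorem
makes `f` a decreasing bijection `(0, π) → (0, ∞)`; every `cot φ` with `φ ∈ (0, π/2)` is positive.
-/

open Real Set Filter Topology

lemma Real.sin_mul_cos_lt {u : ℝ} (hu : 0 < u) : sin u * cos u < u := by
  have h := sin_lt (by positivity : 0 < 2 * u)
  rw [sin_two_mul] at h
  linarith

lemma Real.mul_cos_lt_sin {u : ℝ} (hu₀ : 0 < u) (hu : u < π) : u * cos u < sin u := by
  rcases le_or_gt (π / 2) u with h | h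
  · have hc : cos u ≤ 0 := cos_nonpos_of_pi_div_two_le_of_le h (by linarith)
    nlinarith [sin_pos_of_pos_of_lt_pi hu₀ hu]
  · have hc : 0 < cos u := cos_pos_of_mem_Ioo ⟨by linarith, h⟩
    have ht := lt_tan hu₀ h
    rwa [tan_eq_sin_div_cos, lt_div_iff₀ hc] at ht

lemma Real.sin_add_pi_sub_mul_cos_pos {x : ℝ} (hx : x ∈ Ioo 0 π) :
    0 < sin x + (π - x) * cos x := by
  have h := mul_cos_lt_sin (u := π - x) (by linarith [hx.2]) (by linarith [hx.1])
  rw [sin_pi_sub, cos_pi_sub] at h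
  linarith

lemma Real.sub_sin_mul_cos_le {u : ℝ} (hu : 0 ≤ u) : u - sin u * cos u ≤ 2 / 3 * u ^ 3 := by
  have h := sin_ge_sub_cube (by positivity : 0 ≤ 2 * u)
  rw [sin_two_mul] at h
  linarith

lemma IsPreconnected.image_eq_Ioi_zero_of_tendsto {α : Type*} [TopologicalSpace α] {s : Set α}
    {f : α → ℝ} {l₁ l₂ : Filter α} [l₁.NeBot] [l₂.NeBot] (hs : IsPreconnected s)
    (hf : ContinuousOn f s) (hpos : ∀ x ∈ s, 0 < f x) (hs₁ : s ∈ l₁) (hs₂ : s ∈ l₂)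
    (htop : Tendsto f l₁ atTop) (hzero : Tendsto f l₂ (𝓝 0)) : f '' s = Ioi 0 := by
  refine (image_subset_iff.2 hpos).antisymm fun y (hy : 0 < y) => ?_
  obtain ⟨a, has, hya⟩ := ((eventually_mem_set.2 hs₁).and (htop.eventually_gt_atTop y)).exists
  obtain ⟨b, hbs, hby⟩ := ((eventually_mem_set.2 hs₂).and (hzero.eventually_lt_const hy)).exists
  exact hs.intermediate_value hbs has hf ⟨hby.le, hya.le⟩

/-- `cot φ = zeroAreaCot ψ` is the zero-area condition `Δz = 0` divided by `sin² φ`, with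
`ρ = sin φ / sin ψ` eliminated. -/
noncomputable def zeroAreaCot (ψ : ℝ) : ℝ :=
  cos ψ / sin ψ + (π - ψ) / sin ψ ^ 2

-- Also at `sin ψ = 0`, where both sides are `0` by the `x / 0 = 0` convention.
lemma zeroAreaCot_eq (ψ : ℝ) :
    zeroAreaCot ψ = (sin ψ * cos ψ + (π - ψ)) / sin ψ ^ 2 := by
  rcases eq_or_ne (sin ψ) 0 with h | h
  · simp [zeroAreaCot, h]
  · rw [zeroAreaCot]
    field_simp

lemma zeroAreaCot_pi_sub (u : ℝ) :
    zeroAreaCot (π - u) = (u - sin u * cos u) / sin u ^ 2 := by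
  rw [zeroAreaCot_eq, sin_pi_sub, cos_pi_sub]
  ring_nf

lemma zeroAreaCot_pos {ψ : ℝ} (hψ : ψ ∈ Ioo 0 π) : 0 < zeroAreaCot ψ := by
  have hu : 0 < π - ψ := by linarith [hψ.2]
  have hsin : 0 < sin (π - ψ) := sin_pos_of_pos_of_lt_pi hu (by linarith [hψ.1])
  rw [← sub_sub_cancel π ψ, zeroAreaCot_pi_sub]
  exact div_pos (sub_pos.2 (sin_mul_cos_lt hu)) (pow_pos hsin 2)

lemma zeroAreaCot_pi_sub_le {u : ℝ} (hu₀ : 0 < u) (hu : u ≤ π / 2) :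
    zeroAreaCot (π - u) ≤ π ^ 2 / 6 * u := by
  have hsin : 2 / π * u ≤ sin u := mul_le_sin hu₀.le hu
  have hsin_pos : 0 < sin u := sin_pos_of_pos_of_lt_pi hu₀ (by linarith [pi_pos])
  have hsin_sq : 4 / π ^ 2 * u ^ 2 ≤ sin u ^ 2 := by
    calc 4 / π ^ 2 * u ^ 2 = (2 / π * u) ^ 2 := by ring
      _ ≤ sin u ^ 2 := pow_le_pow_left₀ (by positivity) hsin 2
  rw [zeroAreaCot_pi_sub, div_le_iff₀ (pow_pos hsin_pos 2)]
  calc u - sin u * cos u ≤ 2 / 3 * u ^ 3 := sub_sin_mul_cos_le hu₀.le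
    _ = π ^ 2 / 6 * u * (4 / π ^ 2 * u ^ 2) := by field_simp; ring
    _ ≤ π ^ 2 / 6 * u * sin u ^ 2 := by gcongr

lemma hasDerivAt_zeroAreaCot {x : ℝ} (hx : sin x ≠ 0) :
    HasDerivAt zeroAreaCot (-2 * (sin x + (π - x) * cos x) / sin x ^ 3) x := by
  have hcot := (hasDerivAt_cos x).div (hasDerivAt_sin x) hx
  have hcsc := ((hasDerivAt_id x).const_sub π).div ((hasDerivAt_sin x).pow 2) (pow_ne_zero 2 hx)
  refine (hcot.add hcsc).congr_deriv ?_
  simp only [Pi.pow_apply, id]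
  field_simp
  linear_combination (-sin x ^ 2) * sin_sq_add_cos_sq x

lemma continuousOn_zeroAreaCot : ContinuousOn zeroAreaCot (Ioo 0 π) := fun _ hx =>
  (hasDerivAt_zeroAreaCot (sin_pos_of_pos_of_lt_pi hx.1 hx.2).ne').continuousAt.continuousWithinAt

lemma strictAntiOn_zeroAreaCot : StrictAntiOn zeroAreaCot (Ioo 0 π) := by
  refine strictAntiOn_of_hasDerivWithinAt_neg (convex_Ioo 0 π) continuousOn_zeroAreaCot
    (f' := fun x => -2 * (sin x + (π - x) * cos x) / sin x ^ 3) ?_ ?_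
  all_goals
    rw [interior_Ioo]
    intro x hx
  · exact (hasDerivAt_zeroAreaCot (sin_pos_of_pos_of_lt_pi hx.1 hx.2).ne').hasDerivWithinAt
  · have hnum := sin_add_pi_sub_mul_cos_pos hx
    have hden := pow_pos (sin_pos_of_pos_of_lt_pi hx.1 hx.2) 3
    exact div_neg_of_neg_of_pos (by linarith) hden

lemma tendsto_zeroAreaCot_nhdsGT_zero : Tendsto zeroAreaCot (𝓝[>] 0) atTop := by
  have hnum : Tendsto (fun ψ => sin ψ * cos ψ + (π - ψ)) (𝓝[>] 0) (𝓝 π) :=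
    tendsto_nhdsWithin_of_tendsto_nhds <|
      (by fun_prop : Continuous fun ψ => sin ψ * cos ψ + (π - ψ)).tendsto' 0 π (by simp)
  have hden : Tendsto (fun ψ => sin ψ ^ 2) (𝓝[>] 0) (𝓝[>] 0) := by
    refine tendsto_nhdsWithin_iff.2 ⟨?_, ?_⟩
    · exact tendsto_nhdsWithin_of_tendsto_nhds <|
        (by fun_prop : Continuous fun ψ => sin ψ ^ 2).tendsto' 0 0 (by simp)
    · filter_upwards [Ioo_mem_nhdsGT pi_pos] with ψ hψ
      exact pow_pos (sin_pos_of_pos_of_lt_pi hψ.1 hψ.2) 2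
  have hfrac : zeroAreaCot = fun ψ => (sin ψ * cos ψ + (π - ψ)) * (sin ψ ^ 2)⁻¹ :=
    funext fun ψ => by rw [zeroAreaCot_eq, div_eq_mul_inv]
  rw [hfrac]
  exact hnum.pos_mul_atTop pi_pos (tendsto_inv_nhdsGT_zero.comp hden)

lemma tendsto_zeroAreaCot_nhdsLT_pi : Tendsto zeroAreaCot (𝓝[<] π) (𝓝 0) := by
  have hbound : Tendsto (fun ψ => π ^ 2 / 6 * (π - ψ)) (𝓝[<] π) (𝓝 0) :=
    tendsto_nhdsWithin_of_tendsto_nhds <|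
      (by fun_prop : Continuous fun ψ => π ^ 2 / 6 * (π - ψ)).tendsto' π 0 (by simp)
  refine tendsto_of_tendsto_of_tendsto_of_le_of_le' tendsto_const_nhds hbound ?_ ?_
  all_goals filter_upwards [Ioo_mem_nhdsLT (by linarith [pi_pos] : π / 2 < π)] with ψ hψ
  · exact (zeroAreaCot_pos ⟨by linarith [pi_pos, hψ.1], hψ.2⟩).le
  · simpa using zeroAreaCot_pi_sub_le (u := π - ψ) (by linarith [hψ.2]) (by linarith [hψ.1])

lemma image_zeroAreaCot : zeroAreaCot '' Ioo 0 π = Ioi 0 :=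
  isPreconnected_Ioo.image_eq_Ioi_zero_of_tendsto continuousOn_zeroAreaCot
    (fun _ => zeroAreaCot_pos) (Ioo_mem_nhdsGT pi_pos) (Ioo_mem_nhdsLT pi_pos)
    tendsto_zeroAreaCot_nhdsGT_zero tendsto_zeroAreaCot_nhdsLT_pi

/-- For each `φ ∈ (0, π/2)` there is a unique `ψ ∈ (0, π)` with
`cot φ = cot ψ + (π − ψ) csc² ψ`; indeed `ψ ↦ cot ψ + (π−ψ)/sin²ψ` is a
strictly decreasing homeomorphism from `(0, π)` onto `(0, ∞)`. -/
theorem stmt6 :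
    (∀ φ ∈ Set.Ioo (0:ℝ) (π/2), ∃! ψ : ℝ, ψ ∈ Set.Ioo (0:ℝ) π ∧
      Real.cos φ / Real.sin φ
        = Real.cos ψ / Real.sin ψ + (π - ψ) / Real.sin ψ ^ 2) ∧
    StrictAntiOn (fun ψ : ℝ => Real.cos ψ / Real.sin ψ + (π - ψ) / Real.sin ψ ^ 2)
      (Set.Ioo 0 π) ∧
    ContinuousOn (fun ψ : ℝ => Real.cos ψ / Real.sin ψ + (π - ψ) / Real.sin ψ ^ 2)
      (Set.Ioo 0 π) ∧
    (fun ψ : ℝ => Real.cos ψ / Real.sin ψ + (π - ψ) / Real.sin ψ ^ 2) ''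
      Set.Ioo 0 π = Set.Ioi 0 := by
  refine ⟨fun φ hφ => ?_, strictAntiOn_zeroAreaCot, continuousOn_zeroAreaCot, image_zeroAreaCot⟩
  have hcot : cos φ / sin φ ∈ zeroAreaCot '' Ioo 0 π := by
    rw [image_zeroAreaCot]
    exact div_pos (cos_pos_of_mem_Ioo ⟨by linarith [hφ.1, pi_pos], hφ.2⟩)
      (sin_pos_of_pos_of_lt_pi hφ.1 (by linarith [hφ.2, pi_pos]))
  obtain ⟨ψ, hψ, hψφ⟩ := hcot
  exact ⟨ψ, ⟨hψ, hψφ.symm⟩, fun ψ' h =>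
    strictAntiOn_zeroAreaCot.injOn h.1 hψ (h.2.symm.trans hψφ.symm)⟩
end

section
/- Any billiard trajectory in the infinite cylinder Z = D² × ℝ over the unit disc (for the standard sub-Riemannian structure on ℝ³) that never touches the boundary ∂Z is never periodic: a geodesic of (ℝ³, ξ_std, g_std) whose planar projection is a circle of positive radius contained in the open unit disc satisfies z(t + T) = z(t) + A for all t, where T is the period of the projection and A > 0 is the area of the projected circle; hence the curve is not closed. -/
open Real

/-!
The vertical velocity of the horizontal lift is `(ρ² + ρ (cx cos t + cy sin t)) / 2`, whose
primitive `(ρ (cx sin t - cy cos t) + ρ² t) / 2` is the sum of a `2π`-periodic part and the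
linear drift `ρ² t / 2`. Over any `P` at which the planar circle closes up (`cos P = 1`,
`sin P = 0`) the height therefore grows by `ρ² P / 2`, which is `πρ²` for `P = 2π` and never `0`
for `P > 0`.
-/

theorem sub_eq_sub_of_hasDerivAt_eq {𝕜 G : Type*} [RCLike 𝕜] [NormedAddCommGroup G]
    [NormedSpace 𝕜 G] {f g f' : 𝕜 → G} (hf : ∀ t, HasDerivAt f (f' t) t)
    (hg : ∀ t, HasDerivAt g (f' t) t) (a b : 𝕜) : f b - f a = g b - g a := by
  have hfg : ∀ t, HasDerivAt (f - g) 0 t := fun t => by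
    simpa using (hf t).sub (hg t)
  have := is_const_of_deriv_eq_zero (fun t => (hfg t).differentiableAt)
    (fun t => (hfg t).deriv) b a
  rw [sub_eq_sub_iff_sub_eq_sub, ← Pi.sub_apply, this, Pi.sub_apply]

noncomputable def circleLiftHeight (ρ cx cy t : ℝ) : ℝ :=
  (ρ * (cx * sin t - cy * cos t) + ρ ^ 2 * t) / 2

theorem hasDerivAt_circleLiftHeight (ρ cx cy t : ℝ) :
    HasDerivAt (circleLiftHeight ρ cx cy)
      (((cx + ρ * cos t) * (ρ * cos t) - (cy + ρ * sin t) * (-(ρ * sin t))) / 2) t := by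
  have h := ((((hasDerivAt_sin t).const_mul cx).sub ((hasDerivAt_cos t).const_mul cy)).const_mul
    ρ |>.add ((hasDerivAt_id t).const_mul (ρ ^ 2))).div_const 2
  refine h.congr_deriv ?_
  linear_combination (-ρ ^ 2 / 2) * sin_sq_add_cos_sq t

theorem circleLiftHeight_add_of_cos_eq_one {ρ cx cy P : ℝ} (hcos : cos P = 1) (hsin : sin P = 0)
    (t : ℝ) : circleLiftHeight ρ cx cy (t + P) = circleLiftHeight ρ cx cy t + ρ ^ 2 * P / 2 := by
  simp only [circleLiftHeight, sin_add, cos_add, hcos, hsin]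
  ring

theorem cos_eq_one_and_sin_eq_zero_of_circle_eq {ρ cx cy P : ℝ} (hρ : ρ ≠ 0)
    (hx : cx + ρ * cos P = cx + ρ * cos 0) (hy : cy + ρ * sin P = cy + ρ * sin 0) :
    cos P = 1 ∧ sin P = 0 := by
  rw [cos_zero, add_right_inj, mul_eq_mul_left_iff] at hx
  rw [sin_zero, add_right_inj, mul_eq_mul_left_iff] at hy
  exact ⟨hx.resolve_right hρ, hy.resolve_right hρ⟩

theorem stmt7_general (ρ cx cy : ℝ) (hρ : 0 < ρ)
    (z : ℝ → ℝ)
    (hz : ∀ t, HasDerivAt z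
      (((cx + ρ * Real.cos t) * (ρ * Real.cos t)
        - (cy + ρ * Real.sin t) * (-(ρ * Real.sin t))) / 2) t) :
    (∀ t, z (t + 2 * π) = z t + π * ρ ^ 2) ∧
    ¬ ∃ P > 0, ∀ t : ℝ,
      cx + ρ * Real.cos (t + P) = cx + ρ * Real.cos t ∧
      cy + ρ * Real.sin (t + P) = cy + ρ * Real.sin t ∧
      z (t + P) = z t := by
  have hgain : ∀ {P}, cos P = 1 → sin P = 0 → ∀ t, z (t + P) - z t = ρ ^ 2 * P / 2 :=
    fun hcos hsin t => by
      rw [sub_eq_sub_of_hasDerivAt_eq hz (hasDerivAt_circleLiftHeight ρ cx cy),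
        circleLiftHeight_add_of_cos_eq_one hcos hsin, add_sub_cancel_left]
  refine ⟨fun t => ?_, ?_⟩
  · linarith [hgain cos_two_pi sin_two_pi t]
  · rintro ⟨P, hP, hperiodic⟩
    obtain ⟨hx, hy, hz₀⟩ := hperiodic 0
    rw [zero_add] at hx hy hz₀
    obtain ⟨hcos, hsin⟩ := cos_eq_one_and_sin_eq_zero_of_circle_eq hρ.ne' hx hy
    have := hgain hcos hsin 0
    rw [zero_add, hz₀, sub_self] at this
    linarith [mul_pos (pow_pos hρ 2) hP]

/-- A geodesic of the standard sub-Riemannian structure on `ℝ³` whose planar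
projection is a circle of positive radius contained in the open unit disc
gains height `πρ² > 0` after each period of the projection; in particular it is
never periodic, so the billiard in the infinite cylinder `D² × ℝ` has no
periodic trajectories avoiding the boundary. -/
theorem stmt7 (ρ cx cy : ℝ) (hρ : 0 < ρ)
    (hdisc : Real.sqrt (cx ^ 2 + cy ^ 2) + ρ < 1)
    (z : ℝ → ℝ)
    (hz : ∀ t, HasDerivAt z
      (((cx + ρ * Real.cos t) * (ρ * Real.cos t)
        - (cy + ρ * Real.sin t) * (-(ρ * Real.sin t))) / 2) t) :
    (∀ t, z (t + 2 * π) = z t + π * ρ ^ 2) ∧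
    ¬ ∃ P > 0, ∀ t : ℝ,
      cx + ρ * Real.cos (t + P) = cx + ρ * Real.cos t ∧
      cy + ρ * Real.sin (t + P) = cy + ρ * Real.sin t ∧
      z (t + P) = z t :=
  stmt7_general ρ cx cy hρ z hz
end

section
/- Consider the circular arc of radius ρ = sin φ / sin ψ joining two points of the unit circle subtending angle 2φ at the origin and angle 2ψ at the arc's center, where the arc lies on the far side (angle 2π − 2ψ traversed). The signed area enclosed between the arc and the unit circle (through the short boundary arc) equals Δz = sin φ cos φ − ((π − ψ)ρ² + sin ψ cos ψ · ρ²). In particular Δz = 0 if and only if cot φ = cot ψ + (π − ψ) csc² ψ (for φ, ψ ∈ (0, π)). -/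
open Real intervalIntegral

/-!
On the arc `t ↦ (cx + ρ cos(-ψ - t), ρ sin(-ψ - t))` the integrand of `(1/2)∫(x y' − y x')`
collapses, by `sin² + cos² = 1`, to `-ρ²/2 - (cx ρ/2) cos(ψ + t)`, which integrates in closed form.
Using `ρ sin ψ = sin φ`, the resulting `Δz` factors as
`sin² φ · (cot φ − cot ψ − (π − ψ) csc² ψ)`, so it vanishes exactly when the second factor does.
-/

lemma arc_integrand_eq (ρ cx ψ t : ℝ) :
    (1/2) * ((cx + ρ * cos (-ψ - t)) * (-(ρ * cos (-ψ - t)))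
      - (ρ * sin (-ψ - t)) * (ρ * sin (-ψ - t)))
      = -(ρ ^ 2 / 2) - cx * ρ / 2 * cos (ψ + t) := by
  rw [show -ψ - t = -(ψ + t) by ring, cos_neg, sin_neg]
  linear_combination (-(ρ ^ 2) / 2) * sin_sq_add_cos_sq (ψ + t)

lemma integral_arc_integrand (ρ cx ψ L : ℝ) :
    ∫ t in (0:ℝ)..L, (1/2) * ((cx + ρ * cos (-ψ - t)) * (-(ρ * cos (-ψ - t)))
      - (ρ * sin (-ψ - t)) * (ρ * sin (-ψ - t)))
      = -(ρ ^ 2 / 2) * L - cx * ρ / 2 * (sin (ψ + L) - sin ψ) := by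
  simp only [arc_integrand_eq]
  rw [integral_sub intervalIntegrable_const (by apply Continuous.intervalIntegrable; fun_prop),
    integral_const_mul, integral_comp_add_left, integral_cos]
  simp only [integral_const, sub_zero, smul_eq_mul, add_zero]
  ring

lemma area_defect_eq_sin_sq_mul {φ ψ : ℝ} (hφ : sin φ ≠ 0) (hψ : sin ψ ≠ 0) :
    sin φ * cos φ
        - ((π - ψ) * (sin φ / sin ψ) ^ 2 + sin ψ * cos ψ * (sin φ / sin ψ) ^ 2)
      = sin φ ^ 2 * (cos φ / sin φ - (cos ψ / sin ψ + (π - ψ) / sin ψ ^ 2)) := by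
  field_simp
  ring

/-- The signed area swept by the circular arc of radius `ρ = sin φ / sin ψ`
joining two points of the unit circle (subtending angle `2φ` at the origin and
`2π − 2ψ` at the arc's center), computed as the horizontal-lift integral
`(1/2)∫(x y' − y x')`, equals
`Δz = sin φ cos φ − ((π − ψ)ρ² + sin ψ cos ψ ρ²)`; and `Δz = 0` iff
`cot φ = cot ψ + (π − ψ) csc² ψ`. -/
theorem stmt8 (φ ψ : ℝ) (hφ : φ ∈ Set.Ioo (0:ℝ) π) (hψ : ψ ∈ Set.Ioo (0:ℝ) π)
    (ρ cx : ℝ) (hρ : ρ = Real.sin φ / Real.sin ψ)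
    (hcx : cx = Real.cos φ - ρ * Real.cos ψ) :
    ((∫ t in (0:ℝ)..(2 * π - 2 * ψ),
      (1/2) * ((cx + ρ * Real.cos (-ψ - t)) * (-(ρ * Real.cos (-ψ - t)))
        - (ρ * Real.sin (-ψ - t)) * (ρ * Real.sin (-ψ - t))))
      = Real.sin φ * Real.cos φ
        - ((π - ψ) * ρ ^ 2 + Real.sin ψ * Real.cos ψ * ρ ^ 2)) ∧
    (Real.sin φ * Real.cos φ
        - ((π - ψ) * ρ ^ 2 + Real.sin ψ * Real.cos ψ * ρ ^ 2) = 0 ↔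
      Real.cos φ / Real.sin φ
        = Real.cos ψ / Real.sin ψ + (π - ψ) / Real.sin ψ ^ 2) := by
  have hsφ : sin φ ≠ 0 := (sin_pos_of_pos_of_lt_pi hφ.1 hφ.2).ne'
  have hsψ : sin ψ ≠ 0 := (sin_pos_of_pos_of_lt_pi hψ.1 hψ.2).ne'
  have hρψ : ρ * sin ψ = sin φ := by rw [hρ]; field_simp
  constructor
  · rw [integral_arc_integrand, show ψ + (2 * π - 2 * ψ) = -ψ + 2 * π by ring, sin_add_two_pi,
      sin_neg, hcx]
    linear_combination cos φ * hρψ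
  · rw [hρ, area_defect_eq_sin_sq_mul hsφ hsψ, mul_eq_zero, sub_eq_zero]
    simp [hsφ]
end

section
/- Consider a billiard reflection at the horizontal plane H = {z = 0} in (ℝ³, ξ_std, g_std) at a point at planar distance r > 0 from the origin. If the ingoing trajectory hits H with magnetic momentum a ∈ ℝ and its planar projection makes angle φ ∈ (0, π) with the radial line, then the outgoing angle with the radial line is π − φ and the outgoing magnetic momentum is a + 4 sin(φ)/r. -/
open Real

/- Adding `s · dz` changes only the `dy`-component of the unit covector `(a, cos φ, -sin φ)`,
by `s r / 2`.  Unit energy then forces `(s r / 2)(s r / 2 - 2 sin φ) = 0`: the trivial shift, or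
the one that flips the sign of the `dy`-component, which is the reflection `φ ↦ π - φ`. -/

lemma sq_add_neg_add_mul_sq_eq_one_iff {c t k s : ℝ} (hct : c ^ 2 + t ^ 2 = 1) (hk : k ≠ 0) :
    c ^ 2 + (-t + s * k) ^ 2 = 1 ↔ s = 0 ∨ s * k = 2 * t := by
  have expand : c ^ 2 + (-t + s * k) ^ 2 - 1 = s * k * (s * k - 2 * t) := by
    linear_combination hct
  rw [← sub_eq_zero, expand, mul_eq_zero, mul_eq_zero, sub_eq_zero]
  simp only [hk, or_false]

lemma cos_sq_add_neg_sin_add_mul_sq_eq_one_iff {r φ s : ℝ} (hr : r ≠ 0) (hs : s ≠ 0) :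
    cos φ ^ 2 + (-sin φ + s * (r / 2)) ^ 2 = 1 ↔ s = 4 * sin φ / r := by
  rw [sq_add_neg_add_mul_sq_eq_one_iff (cos_sq_add_sin_sq φ) (by positivity)]
  simp only [hs, false_or]
  constructor <;> intro h
  · field_simp; linarith
  · rw [h]; field_simp; ring

/-- Billiard reflection at the horizontal plane `H = {z = 0}` in the standard
sub-Riemannian `ℝ³`, at a point at planar radius `r > 0`.  In the coframe
`(α, dx, dy)` at that point, `dz = α + (r/2)dy`; the ingoing unit covector with
angle of incidence `φ` against the radial line and magnetic momentum `a` is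
`(a, cos φ, −sin φ)`.  The reflection adds a unique nonzero multiple `s` of
`dz` preserving unit energy, namely `s = 4 sin φ / r`; the outgoing momentum is
`a + 4 sin φ / r` and the outgoing planar direction makes angle `π − φ` with
the radial line. -/
theorem stmt10 (r a φ : ℝ) (hr : 0 < r) (hφ : φ ∈ Set.Ioo (0:ℝ) π) :
    (∃! s : ℝ, s ≠ 0 ∧
      Real.cos φ ^ 2 + (-Real.sin φ + s * (r / 2)) ^ 2 = 1) ∧
    (∀ s : ℝ, s ≠ 0 →
      Real.cos φ ^ 2 + (-Real.sin φ + s * (r / 2)) ^ 2 = 1 →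
      a + s = a + 4 * Real.sin φ / r ∧
      -Real.sin φ + s * (r / 2) = Real.sin (π - φ) ∧
      Real.cos φ = -Real.cos (π - φ)) := by
  have hsin : 0 < sin φ := sin_pos_of_pos_of_lt_pi hφ.1 hφ.2
  have shift_ne_zero : 4 * sin φ / r ≠ 0 := by positivity
  refine ⟨⟨4 * sin φ / r, ⟨shift_ne_zero, ?_⟩, fun s ⟨hs, h⟩ => ?_⟩, fun s hs h => ?_⟩
  · exact (cos_sq_add_neg_sin_add_mul_sq_eq_one_iff hr.ne' shift_ne_zero).2 rfl
  · exact (cos_sq_add_neg_sin_add_mul_sq_eq_one_iff hr.ne' hs).1 h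
  · obtain rfl := (cos_sq_add_neg_sin_add_mul_sq_eq_one_iff hr.ne' hs).1 h
    refine ⟨rfl, ?_, by rw [cos_pi_sub, neg_neg]⟩
    rw [sin_pi_sub]
    field_simp
    ring
end

section
/- A germ of billiard trajectory in the half-space table {z ≥ 0} of (ℝ³, ξ_std, g_std) reflects to itself at a boundary point at radius r > 0 if and only if the ingoing angle with the radial direction is φ = π/2 and the ingoing magnetic momentum is a = −2/r. Equivalently: the only self-reflecting trajectories at radius r are those whose planar projection is a circle of radius r/2 centered at distance r/2 from the origin, passing through the reflection point and the origin. -/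
open Real

/-!
At a boundary point of radius `r`, the ingoing covector `(a, cos φ, −sin φ)` reflects to
`(a + 4 sin φ / r, cos φ, sin φ)`. Matching this with the time reversal `(−a, −cos φ, sin φ)`
forces `cos φ = 0`, i.e. `φ = π/2` on `(0, π)`, and then `2a = −4/r`. The planar projection
then has curvature `|a| = 2/r`, so it is a circle of radius `r/2`.
-/

theorem Real.cos_eq_zero_iff_of_mem_Icc {φ : ℝ} (hφ : φ ∈ Set.Icc 0 π) :
    cos φ = 0 ↔ φ = π / 2 := by
  refine ⟨fun h ↦ injOn_cos hφ ⟨by positivity, by linarith [pi_pos]⟩ ?_,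
    fun h ↦ h ▸ cos_pi_div_two⟩
  rw [h, cos_pi_div_two]

theorem reflection_eq_time_reversal_iff (r a φ : ℝ) :
    ((a + 4 * sin φ / r, cos φ, sin φ) : ℝ × ℝ × ℝ) = (-a, -cos φ, sin φ) ↔
      cos φ = 0 ∧ a = -2 * sin φ / r := by
  simp only [Prod.mk.injEq, self_eq_neg, and_true, and_comm (a := _ = -a)]
  refine and_congr_right fun _ ↦ ⟨fun h ↦ ?_, fun h ↦ ?_⟩
  · linarith [show 4 * sin φ / r = -2 * (-2 * sin φ / r) by ring]
  · rw [h]; ring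

theorem one_div_abs_neg_two_div {r : ℝ} (hr : 0 < r) : 1 / |-2 / r| = r / 2 := by
  rw [neg_div, abs_neg, abs_of_pos (by positivity)]
  field_simp

/-- Self-reflection in the half-space table `{z ≥ 0}` of the standard
sub-Riemannian `ℝ³`: the outgoing data `(a + 4 sin φ/r, cos φ, sin φ)` of the
reflection of the ingoing covector `(a, cos φ, −sin φ)` at a boundary point of
radius `r > 0` equals the time reversal `(−a, −cos φ, sin φ)` of the ingoing
covector if and only if `φ = π/2` and `a = −2/r`; in this case the radius of
curvature of the planar projection is `1/|a| = r/2`. -/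
theorem stmt11 (r a φ : ℝ) (hr : 0 < r) (hφ : φ ∈ Set.Ioo (0:ℝ) π) :
    (((a + 4 * Real.sin φ / r, Real.cos φ, Real.sin φ) : ℝ × ℝ × ℝ)
        = (-a, -Real.cos φ, Real.sin φ) ↔ (φ = π / 2 ∧ a = -2 / r)) ∧
    ((φ = π / 2 ∧ a = -2 / r) → 1 / |a| = r / 2) := by
  refine ⟨?_, fun ⟨_, ha⟩ ↦ ha ▸ one_div_abs_neg_two_div hr⟩
  rw [reflection_eq_time_reversal_iff, cos_eq_zero_iff_of_mem_Icc (Set.Ioo_subset_Icc_self hφ)]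
  exact and_congr_right fun hφ ↦ by rw [hφ, sin_pi_div_two, mul_one]
end

section
/- Let T > 0. Define, for r > 0, R(r) = r·|cos(T/r)| and z₁(r) = rT/4 + (r²/8)·sin(2T/r). Then for every r > 0 and R₁ > 0 with R(r) = R₁, one has z₁(r) ≤ rT/4 + (1/4)·sqrt((r² − R₁²)·R₁²), with equality if and only if sin(2T/r) ≥ 0; and this upper bound is strictly increasing in r. Consequently, among all r with R(r) = R₁, the value z₁(r) is maximised at the largest such r. -/
/-!
Writing `R = r|cos(T/r)|`, one has `√((r² − R²)R²) = (r²/2)|sin(2T/r)|`, so the bound is `z₁(r)`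
with `sin(2T/r)` replaced by `|sin(2T/r)|`. As the bound increases with `r`, the maximisation
claim reduces to `sin(2T/rmax) ≥ 0` at the largest solution `rmax` of `R(r) = R₁`.
-/

open Real Set

noncomputable section

namespace ConormalGeodesic

def radius (T r : ℝ) : ℝ := r * |cos (T / r)|

def height (T r : ℝ) : ℝ := r * T / 4 + r ^ 2 / 8 * sin (2 * T / r)

def heightBound (T R₁ r : ℝ) : ℝ := r * T / 4 + 1 / 4 * √((r ^ 2 - R₁ ^ 2) * R₁ ^ 2)

lemma radius_le {T r : ℝ} (hr : 0 ≤ r) : radius T r ≤ r :=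
  mul_le_of_le_one_right hr (abs_cos_le_one _)

lemma sqrt_sub_sq_mul_sq_abs_cos (r θ : ℝ) :
    √((r ^ 2 - (r * |cos θ|) ^ 2) * (r * |cos θ|) ^ 2) = r ^ 2 / 2 * |sin (2 * θ)| := by
  have h : (r ^ 2 - (r * |cos θ|) ^ 2) * (r * |cos θ|) ^ 2 = (r ^ 2 / 2 * sin (2 * θ)) ^ 2 := by
    rw [mul_pow r, sq_abs, sin_two_mul]
    linear_combination -r ^ 4 * cos θ ^ 2 * sin_sq_add_cos_sq θ
  rw [h, sqrt_sq_eq_abs, abs_mul, abs_of_nonneg (by positivity)]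

lemma heightBound_radius {T r : ℝ} :
    heightBound T (radius T r) r = r * T / 4 + r ^ 2 / 8 * |sin (2 * T / r)| := by
  rw [heightBound, radius, sqrt_sub_sq_mul_sq_abs_cos, mul_div_assoc 2]
  ring

lemma height_le_heightBound_radius (T r : ℝ) : height T r ≤ heightBound T (radius T r) r := by
  rw [heightBound_radius, height]
  gcongr
  exact le_abs_self _

lemma height_eq_heightBound_radius_iff {T r : ℝ} (hr : 0 < r) :
    height T r = heightBound T (radius T r) r ↔ 0 ≤ sin (2 * T / r) := by
  rw [heightBound_radius, height, add_right_inj, mul_right_inj' (by positivity), eq_comm,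
    abs_eq_self]

lemma strictMonoOn_heightBound {T R₁ : ℝ} (hT : 0 < T) (hR₁ : 0 ≤ R₁) :
    StrictMonoOn (heightBound T R₁) (Ici R₁) := by
  refine StrictMonoOn.add_monotone (fun a _ b _ hab => by gcongr) fun a ha b _ hab => ?_
  have : 0 ≤ a := hR₁.trans ha
  gcongr

lemma cos_two_mul_sub_of_cos_eq_zero {a : ℝ} (ha : cos a = 0) (x : ℝ) :
    cos (2 * a - x) = -cos x := by
  rw [cos_sub, cos_two_mul, sin_two_mul, ha]
  ring

lemma exists_cos_eq_zero_of_sin_two_mul_neg {θ : ℝ} (hθ : 0 < θ) (h : sin (2 * θ) < 0) :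
    ∃ a, cos a = 0 ∧ a < θ ∧ θ < 2 * a := by
  set m := ⌊2 * θ / (2 * π)⌋₊
  have hm_le : m * (2 * π) ≤ 2 * θ := by
    have := Nat.floor_le (by positivity : 0 ≤ 2 * θ / (2 * π))
    rwa [le_div_iff₀ (by positivity)] at this
  have hm_lt : 2 * θ < (m + 1) * (2 * π) := by
    have := Nat.lt_floor_add_one (2 * θ / (2 * π))
    rwa [div_lt_iff₀ (by positivity)] at this
  have hπ_lt : π < 2 * θ - m * (2 * π) := by
    by_contra! hle
    have := sin_nonneg_of_nonneg_of_le_pi (sub_nonneg.2 hm_le) hle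
    rw [sin_sub_nat_mul_two_pi] at this
    linarith
  refine ⟨π / 2 + m * π, ?_, by linarith, by nlinarith [pi_pos]⟩
  rw [cos_add_nat_mul_pi, cos_pi_div_two, mul_zero]

lemma continuousOn_radius (T : ℝ) {a b : ℝ} (ha : 0 < a) : ContinuousOn (radius T) (Icc a b) :=
  continuousOn_id.mul <| (continuous_abs.comp continuous_cos).comp_continuousOn <|
    continuousOn_const.div continuousOn_id fun _ hx => (ha.trans_le hx.1).ne'

/-- If `sin(2T/ρ) < 0`, then `T/ρ` lies just past a zero `a` of `cos`. The radius vanishes at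
`T/a > ρ`, and at the reflected angle `2a − T/ρ` it exceeds `radius T ρ`, so the intermediate value
theorem yields some `r > ρ` with the same radius. -/
lemma sin_two_mul_div_nonneg_of_forall_radius_eq_le {T ρ : ℝ} (hT : 0 < T) (hρ : 0 < ρ)
    (hmax : ∀ r, 0 < r → radius T r = radius T ρ → r ≤ ρ) : 0 ≤ sin (2 * T / ρ) := by
  by_contra! hneg
  rw [mul_div_assoc] at hneg
  obtain ⟨a, ha, haθ, hθa⟩ := exists_cos_eq_zero_of_sin_two_mul_neg (div_pos hT hρ) hneg
  have ha₀ : 0 < a := by linarith [div_pos hT hρ]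
  have hρ_lt : ρ < T / a := by rwa [lt_div_iff₀ ha₀, mul_comm, ← lt_div_iff₀ hρ]
  have hlt : T / a < T / (2 * a - T / ρ) := div_lt_div_of_pos_left hT (by linarith) (by linarith)
  have hzero : radius T (T / a) = 0 := by
    rw [radius, div_div_cancel₀ hT.ne', ha, abs_zero, mul_zero]
  have hbig : radius T ρ ≤ radius T (T / (2 * a - T / ρ)) := by
    rw [radius, radius, div_div_cancel₀ hT.ne', cos_two_mul_sub_of_cos_eq_zero ha, abs_neg]
    exact mul_le_mul_of_nonneg_right (hρ_lt.trans hlt).le (abs_nonneg _)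
  obtain ⟨c, hc, hcρ⟩ := intermediate_value_Icc hlt.le (continuousOn_radius T (hρ.trans hρ_lt))
    ⟨hzero ▸ mul_nonneg hρ.le (abs_nonneg _), hbig⟩
  exact (hρ_lt.trans_le hc.1).not_ge (hmax c ((hρ.trans hρ_lt).trans_le hc.1) hcρ)

end ConormalGeodesic

end

open ConormalGeodesic in
/-- For `R(r) = r|cos(T/r)|` and `z₁(r) = rT/4 + (r²/8)sin(2T/r)` (heights of
conormal geodesics from the plane `{z=0}` in the Heisenberg group): whenever
`R(r) = R₁`, one has `z₁(r) ≤ rT/4 + (1/4)√((r²−R₁²)R₁²)` with equality iff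
`sin(2T/r) ≥ 0`; the bound is strictly increasing in `r`, and hence `z₁` is
maximised at the largest `r` with `R(r) = R₁`. -/
theorem stmt12 (T : ℝ) (hT : 0 < T) :
    let R : ℝ → ℝ := fun r => r * |Real.cos (T / r)|
    let z₁ : ℝ → ℝ := fun r => r * T / 4 + r ^ 2 / 8 * Real.sin (2 * T / r)
    ∀ R₁ : ℝ, 0 < R₁ →
      (∀ r : ℝ, 0 < r → R r = R₁ →
        (z₁ r ≤ r * T / 4 + (1/4) * Real.sqrt ((r ^ 2 - R₁ ^ 2) * R₁ ^ 2) ∧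
         (z₁ r = r * T / 4 + (1/4) * Real.sqrt ((r ^ 2 - R₁ ^ 2) * R₁ ^ 2) ↔
           0 ≤ Real.sin (2 * T / r)))) ∧
      StrictMonoOn
        (fun r => r * T / 4 + (1/4) * Real.sqrt ((r ^ 2 - R₁ ^ 2) * R₁ ^ 2))
        (Set.Ici R₁) ∧
      (∀ r rmax : ℝ, 0 < r → 0 < rmax → R r = R₁ → R rmax = R₁ →
        (∀ r' : ℝ, 0 < r' → R r' = R₁ → r' ≤ rmax) → z₁ r ≤ z₁ rmax) := by
  intro R z₁ R₁ hR₁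
  have hmono : StrictMonoOn (heightBound T R₁) (Ici R₁) := strictMonoOn_heightBound hT hR₁.le
  refine ⟨fun r hr hRr => ?_, hmono, fun r rmax hr hrmax hRr hRrmax hmax => ?_⟩
  · change radius T r = R₁ at hRr
    subst hRr
    exact ⟨height_le_heightBound_radius T r, height_eq_heightBound_radius_iff hr⟩
  · change radius T r = R₁ at hRr
    change radius T rmax = R₁ at hRrmax
    have hsin : 0 ≤ sin (2 * T / rmax) := sin_two_mul_div_nonneg_of_forall_radius_eq_le hT hrmax
      fun r' hr' h => hmax r' hr' (h.trans hRrmax)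
    calc z₁ r = height T r := rfl
      _ ≤ heightBound T R₁ r := hRr ▸ height_le_heightBound_radius T r
      _ ≤ heightBound T R₁ rmax := hmono.monotoneOn (hRr ▸ radius_le hr.le : R₁ ≤ r)
          (hRrmax ▸ radius_le hrmax.le) (hmax r hr hRr)
      _ = height T rmax := by rw [← hRrmax, height_eq_heightBound_radius_iff hrmax |>.2 hsin]
end

section
/- The function F(ψ) = [ψ + arctan(2√2·sin ψ)] − [sin ψ · cos ψ + 2√2·sin ψ] is monotone increasing on [π/2, π], and F(π) = π > 0; moreover F has a zero in (π/2, π) (numerically near ψ ≈ 1.584). In particular F(ψ) ≥ 0 for all ψ ∈ [1.99, π]. -/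
/-!
Write `F = billiardGap a` with `a = 2√2`. Since `arctan` is `1`-Lipschitz and
`sin ψ cos ψ ≤ 0` on `[π/2, π]`, there `F ψ ≥ ψ + arctan a - a`, with equality at `π/2`.
So everything reduces to two-sided bounds on `arctan (2√2) = π/2 - arctan (√2/4)`, which follow from
`x / (1 + x²) ≤ arctan x ≤ x`: `F (π/2) < 0 < F π` gives the zero, and the lower bound at
`ψ = 1.99` gives nonnegativity.
-/

open Real Set

noncomputable def billiardGap (a ψ : ℝ) : ℝ :=
  (ψ + arctan (a * sin ψ)) - (sin ψ * cos ψ + a * sin ψ)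

theorem arctan_sub_arctan_le_sub {x y : ℝ} (hxy : x ≤ y) : arctan y - arctan x ≤ y - x := by
  have hmono : Monotone fun t => t - arctan t :=
    monotone_of_hasDerivAt_nonneg (f' := fun t => 1 - 1 / (1 + t ^ 2))
      (fun t => (hasDerivAt_id t).sub (hasDerivAt_arctan t))
      fun t => show 0 ≤ 1 - 1 / (1 + t ^ 2) by
        rw [sub_nonneg, div_le_one (by positivity)]; nlinarith [sq_nonneg t]
  linarith [hmono hxy]

theorem div_one_add_sq_le_arctan {x : ℝ} (hx : 0 < x) : x / (1 + x ^ 2) ≤ arctan x := by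
  obtain ⟨c, ⟨hc0, hcx⟩, hslope⟩ := exists_hasDerivAt_eq_slope arctan (fun t => 1 / (1 + t ^ 2))
    hx continuous_arctan.continuousOn fun t _ => hasDerivAt_arctan t
  rw [arctan_zero, sub_zero, sub_zero, eq_div_iff hx.ne'] at hslope
  rw [← hslope, one_div_mul_eq_div]
  gcongr

theorem hasDerivAt_billiardGap (a ψ : ℝ) :
    HasDerivAt (billiardGap a)
      (2 * sin ψ ^ 2 - a ^ 3 * sin ψ ^ 2 / (1 + (a * sin ψ) ^ 2) * cos ψ) ψ := by
  have hsin := (hasDerivAt_sin ψ).const_mul a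
  refine (((hasDerivAt_id' ψ).add hsin.arctan).sub
    (((hasDerivAt_sin ψ).mul (hasDerivAt_cos ψ)).add hsin)).congr_deriv ?_
  field_simp
  linear_combination -(1 + a ^ 2 * sin ψ ^ 2) * sin_sq_add_cos_sq ψ

theorem continuous_billiardGap (a : ℝ) : Continuous (billiardGap a) :=
  continuous_iff_continuousAt.2 fun ψ => (hasDerivAt_billiardGap a ψ).continuousAt

theorem monotoneOn_billiardGap {a : ℝ} (ha : 0 ≤ a) :
    MonotoneOn (billiardGap a) (Icc (π / 2) π) := by
  refine monotoneOn_of_hasDerivWithinAt_nonneg (convex_Icc _ _)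
    (continuous_billiardGap a).continuousOn
    (fun ψ _ => (hasDerivAt_billiardGap a ψ).hasDerivWithinAt) fun ψ hψ => ?_
  rw [interior_Icc] at hψ
  have hcos : cos ψ ≤ 0 := cos_nonpos_of_pi_div_two_le_of_le hψ.1.le (by linarith [hψ.2, pi_pos])
  exact sub_nonneg.2 ((mul_nonpos_of_nonneg_of_nonpos (by positivity) hcos).trans (by positivity))

theorem billiardGap_pi (a : ℝ) : billiardGap a π = π := by
  simp [billiardGap]

theorem billiardGap_pi_div_two (a : ℝ) : billiardGap a (π / 2) = π / 2 + arctan a - a := by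
  simp [billiardGap]

theorem add_arctan_sub_le_billiardGap {a ψ : ℝ} (ha : 0 ≤ a) (hψ : ψ ∈ Icc (π / 2) π) :
    ψ + arctan a - a ≤ billiardGap a ψ := by
  have hsin : 0 ≤ sin ψ := sin_nonneg_of_nonneg_of_le_pi (by linarith [hψ.1, pi_pos]) hψ.2
  have hcos : cos ψ ≤ 0 := cos_nonpos_of_pi_div_two_le_of_le hψ.1 (by linarith [hψ.2, pi_pos])
  have harctan := arctan_sub_arctan_le_sub (mul_le_of_le_one_right ha (sin_le_one ψ))
  have hsc : sin ψ * cos ψ ≤ 0 := mul_nonpos_of_nonneg_of_nonpos hsin hcos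
  unfold billiardGap
  linarith

theorem arctan_two_mul_sqrt_two_bounds :
    2 * √2 - 1.99 ≤ arctan (2 * √2) ∧ arctan (2 * √2) < 2 * √2 - π / 2 := by
  have hsqrt_lower : 1.4142 < √2 := by
    rw [lt_sqrt (by norm_num)]; norm_num
  have hsqrt_upper : √2 < 1.4143 := by
    rw [sqrt_lt' (by norm_num)]; norm_num
  have hinv : (2 * √2)⁻¹ = √2 / 4 := by
    field_simp; rw [sq_sqrt zero_le_two]; norm_num
  have hcompl : arctan (2 * √2) = π / 2 - arctan (√2 / 4) := by
    rw [← hinv, arctan_inv_of_pos (by positivity)]; ring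
  have hupper : arctan (√2 / 4) ≤ √2 / 4 := by
    simpa using arctan_sub_arctan_le_sub (show 0 ≤ √2 / 4 by positivity)
  have hlower : 2 * √2 / 9 ≤ arctan (√2 / 4) := by
    have h := div_one_add_sq_le_arctan (show 0 < √2 / 4 by positivity)
    rwa [div_pow, sq_sqrt zero_le_two, show √2 / 4 / (1 + 2 / 4 ^ 2) = 2 * √2 / 9 by ring] at h
  -- The upper bound is tight: it amounts to `π < 20√2/9 ≈ π + 0.0011`.
  constructor <;> linarith [pi_gt_d4, pi_lt_d4]

/-- The function `F(ψ) = [ψ + arctan(2√2 sin ψ)] − [sin ψ cos ψ + 2√2 sin ψ]`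
is monotone increasing on `[π/2, π]`, satisfies `F(π) = π > 0`, has a zero in
`(π/2, π)`, and is nonnegative on `[1.99, π]`. -/
theorem stmt14 :
    let F : ℝ → ℝ := fun ψ =>
      (ψ + Real.arctan (2 * Real.sqrt 2 * Real.sin ψ))
        - (Real.sin ψ * Real.cos ψ + 2 * Real.sqrt 2 * Real.sin ψ)
    MonotoneOn F (Set.Icc (π / 2) π) ∧
    F π = π ∧ (0:ℝ) < π ∧
    (∃ ψ ∈ Set.Ioo (π / 2) π, F ψ = 0) ∧
    (∀ ψ ∈ Set.Icc (1.99:ℝ) π, 0 ≤ F ψ) := by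
  intro F
  have hF : F = billiardGap (2 * √2) := rfl
  have ha : 0 ≤ 2 * √2 := by positivity
  obtain ⟨harctan_lower, harctan_upper⟩ := arctan_two_mul_sqrt_two_bounds
  rw [hF]
  refine ⟨monotoneOn_billiardGap ha, billiardGap_pi _, pi_pos, ?_, fun ψ hψ => ?_⟩
  · have hsign : (0 : ℝ) ∈ Ioo (billiardGap (2 * √2) (π / 2)) (billiardGap (2 * √2) π) := by
      rw [billiardGap_pi_div_two, billiardGap_pi]
      constructor <;> linarith [pi_pos]
    exact intermediate_value_Ioo (by linarith [pi_pos]) (continuous_billiardGap _).continuousOn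
      hsign
  · have hψ' : ψ ∈ Icc (π / 2) π := ⟨by linarith [hψ.1, pi_lt_d2], hψ.2⟩
    linarith [add_arctan_sub_le_billiardGap ha hψ', hψ.1]
end

section
/- The function Δ(ψ) = ψ − cos ψ · sin ψ − sqrt(cos ψ (cos ψ + 1)) + (1/2)·arctan(2·sqrt(cos ψ (cos ψ + 1))) satisfies: (a) its derivative 2 sin²ψ + 2 sin ψ (2 cos ψ + 1)·sqrt(cos ψ(cos ψ+1)) / (1 + 4 cos ψ(cos ψ+1)) is positive on (π/3, π/2); (b) Δ(π/3) = π/2 − 3√3/4 > 0. Hence Δ(ψ) > 0 for all ψ ∈ [π/3, π/2]. -/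
/-!
`Δ` is increasing on `[π/3, π/2]`: writing `S = √(cos ψ (cos ψ + 1))`, its derivative
simplifies to `2 sin²ψ + 2 sin ψ (2 cos ψ + 1) S / (2 cos ψ + 1)²`, a sum of a positive and a
nonnegative term there. So `Δ ψ ≥ Δ(π/3) = π/2 − 3√3/4` (at `π/3`, `S = √3/2` and
`arctan √3 = π/3`), which is positive since `√3 < 2 < π`.
-/

open Real Set

noncomputable def areaDiff (ψ : ℝ) : ℝ :=
  ψ - cos ψ * sin ψ - √(cos ψ * (cos ψ + 1))
    + (1 / 2) * arctan (2 * √(cos ψ * (cos ψ + 1)))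

noncomputable def areaDiffDeriv (ψ : ℝ) : ℝ :=
  2 * sin ψ ^ 2 + 2 * sin ψ * (2 * cos ψ + 1) * √(cos ψ * (cos ψ + 1))
    / (1 + 4 * (cos ψ * (cos ψ + 1)))

lemma hasDerivAt_sqrt_cos_mul_cos_add_one {ψ : ℝ} (hg : 0 < cos ψ * (cos ψ + 1)) :
    HasDerivAt (fun ψ => √(cos ψ * (cos ψ + 1)))
      (-(sin ψ * (2 * cos ψ + 1)) / (2 * √(cos ψ * (cos ψ + 1)))) ψ := by
  have hG : HasDerivAt (fun ψ => cos ψ * (cos ψ + 1)) _ ψ :=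
    (hasDerivAt_cos ψ).mul ((hasDerivAt_cos ψ).add_const 1)
  convert hG.sqrt hg.ne' using 1
  ring

lemma hasDerivAt_areaDiff {ψ : ℝ} (hg : 0 < cos ψ * (cos ψ + 1)) :
    HasDerivAt areaDiff (areaDiffDeriv ψ) ψ := by
  set S := √(cos ψ * (cos ψ + 1))
  have hS2 : S ^ 2 = cos ψ * (cos ψ + 1) := sq_sqrt hg.le
  have hsqrt := hasDerivAt_sqrt_cos_mul_cos_add_one hg
  have hpoly := (hasDerivAt_id ψ).sub ((hasDerivAt_cos ψ).mul (hasDerivAt_sin ψ))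
  have harctan := (hsqrt.const_mul 2).arctan
  refine ((hpoly.sub hsqrt).add (harctan.const_mul (1 / 2))).congr_deriv (Eq.symm ?_)
  have hden : 1 + (2 * S) ^ 2 = 1 + 4 * (cos ψ * (cos ψ + 1)) := by rw [mul_pow, hS2]; ring
  rw [areaDiffDeriv, hden]
  field_simp
  linear_combination (2 * S * (1 + 4 * (cos ψ * (cos ψ + 1)))) * sin_sq_add_cos_sq ψ
    + (4 * sin ψ * (2 * cos ψ + 1)) * hS2

lemma areaDiffDeriv_pos {ψ : ℝ} (hsin : 0 < sin ψ) (hcos : -(1 / 2) ≤ cos ψ) :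
    0 < areaDiffDeriv ψ := by
  have hden : 1 + 4 * (cos ψ * (cos ψ + 1)) = (2 * cos ψ + 1) ^ 2 := by ring
  have hcos' : 0 ≤ 2 * cos ψ + 1 := by linarith
  rw [areaDiffDeriv, hden]
  positivity

lemma continuous_areaDiff : Continuous areaDiff := by
  unfold areaDiff
  fun_prop

lemma areaDiff_pi_div_three : areaDiff (π / 3) = π / 2 - 3 * √3 / 4 := by
  have hS : √(cos (π / 3) * (cos (π / 3) + 1)) = √3 / 2 := by
    rw [cos_pi_div_three, show (1 / 2 : ℝ) * (1 / 2 + 1) = 3 / 2 ^ 2 by norm_num,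
      sqrt_div' _ (by positivity), sqrt_sq zero_le_two]
  rw [areaDiff, hS, cos_pi_div_three, sin_pi_div_three, mul_div_cancel₀ _ two_ne_zero,
    arctan_sqrt_three]
  ring

lemma pi_div_two_sub_pos : 0 < π / 2 - 3 * √3 / 4 := by
  have hsqrt : √3 < 2 := by
    rw [sqrt_lt' two_pos]
    norm_num
  linarith [pi_gt_three]

lemma sin_pos_and_cos_pos_of_mem_Ioo {ψ : ℝ} (hψ : ψ ∈ Ioo 0 (π / 2)) :
    0 < sin ψ ∧ 0 < cos ψ :=
  ⟨sin_pos_of_pos_of_lt_pi hψ.1 (by linarith [hψ.2, pi_pos]),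
    cos_pos_of_mem_Ioo ⟨by linarith [hψ.1, pi_pos], hψ.2⟩⟩

lemma hasDerivAt_areaDiff_and_deriv_pos {ψ : ℝ} (hψ : ψ ∈ Ioo (π / 3) (π / 2)) :
    HasDerivAt areaDiff (areaDiffDeriv ψ) ψ ∧ 0 < areaDiffDeriv ψ := by
  obtain ⟨hsin, hcos⟩ :=
    sin_pos_and_cos_pos_of_mem_Ioo ⟨by linarith [hψ.1, pi_pos], hψ.2⟩
  exact ⟨hasDerivAt_areaDiff (by positivity), areaDiffDeriv_pos hsin (by linarith)⟩

lemma strictMonoOn_areaDiff : StrictMonoOn areaDiff (Icc (π / 3) (π / 2)) := by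
  refine strictMonoOn_of_hasDerivWithinAt_pos (f' := areaDiffDeriv) (convex_Icc _ _)
    continuous_areaDiff.continuousOn (fun ψ hψ => ?_) (fun ψ hψ => ?_) <;>
    rw [interior_Icc] at hψ
  · exact (hasDerivAt_areaDiff_and_deriv_pos hψ).1.hasDerivWithinAt
  · exact (hasDerivAt_areaDiff_and_deriv_pos hψ).2

/-- The area-difference function
`Δ(ψ) = ψ − cos ψ sin ψ − √(cos ψ(cos ψ+1)) + (1/2)arctan(2√(cos ψ(cos ψ+1)))`
has positive derivative
`2 sin²ψ + 2 sin ψ(2 cos ψ+1)√(cos ψ(cos ψ+1))/(1+4 cos ψ(cos ψ+1))`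
on `(π/3, π/2)`, satisfies `Δ(π/3) = π/2 − 3√3/4 > 0`, and hence is positive on
`[π/3, π/2]`. -/
theorem stmt17 :
    let Δ : ℝ → ℝ := fun ψ => ψ - Real.cos ψ * Real.sin ψ
      - Real.sqrt (Real.cos ψ * (Real.cos ψ + 1))
      + (1/2) * Real.arctan (2 * Real.sqrt (Real.cos ψ * (Real.cos ψ + 1)))
    (∀ ψ ∈ Set.Ioo (π / 3) (π / 2),
      HasDerivAt Δ
        (2 * Real.sin ψ ^ 2
          + 2 * Real.sin ψ * (2 * Real.cos ψ + 1)
              * Real.sqrt (Real.cos ψ * (Real.cos ψ + 1))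
            / (1 + 4 * (Real.cos ψ * (Real.cos ψ + 1)))) ψ ∧
      0 < 2 * Real.sin ψ ^ 2
          + 2 * Real.sin ψ * (2 * Real.cos ψ + 1)
              * Real.sqrt (Real.cos ψ * (Real.cos ψ + 1))
            / (1 + 4 * (Real.cos ψ * (Real.cos ψ + 1)))) ∧
    Δ (π / 3) = π / 2 - 3 * Real.sqrt 3 / 4 ∧
    0 < π / 2 - 3 * Real.sqrt 3 / 4 ∧
    (∀ ψ ∈ Set.Icc (π / 3) (π / 2), 0 < Δ ψ) := by
  intro Δ
  refine ⟨fun ψ hψ => hasDerivAt_areaDiff_and_deriv_pos hψ, areaDiff_pi_div_three,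
    pi_div_two_sub_pos, fun ψ hψ => ?_⟩
  have hleft : π / 3 ∈ Icc (π / 3) (π / 2) := left_mem_Icc.mpr (hψ.1.trans hψ.2)
  calc 0 < π / 2 - 3 * √3 / 4 := pi_div_two_sub_pos
    _ = Δ (π / 3) := areaDiff_pi_div_three.symm
    _ ≤ Δ ψ := strictMonoOn_areaDiff.monotoneOn hleft hψ hψ.1
end
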